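/- If μ(A) < 0, then solutions of the matrix Riccati equation ∂_t P_t = A P_t + P_t Aᵀ − P_t S P_t + R with positive semi-definite data satisfy sup_{t≥0} tr(P_t) < ∞, or equivalently sup_{t≥0} ‖P_t‖_F < ∞. -/

import Mathlib

open Matrix MeasureTheory Real
open scoped ENNReal

noncomputable section

/-- The symmetric part `(A + Aᵀ)/2` of a square real matrix. -/
def symmPart {r : ℕ} (A : Matrix (Fin r) (Fin r) ℝ) : Matrix (Fin r) (Fin r) ℝ :=
  (1 / 2 : ℝ) • (A + Aᵀ)

lemma symmPart_isHermitian {r : ℕ} (A : Matrix (Fin r) (Fin r) ℝ) :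
    (symmPart A).IsHermitian := by
  unfold symmPart Matrix.IsHermitian
  ext i j
  simp [Matrix.conjTranspose_apply, Matrix.smul_apply, Matrix.add_apply,
    Matrix.transpose_apply]
  ring

/-- The largest eigenvalue of a Hermitian real matrix. -/
def lambdaMax {n : Type*} [Fintype n] [DecidableEq n] {A : Matrix n n ℝ}
    (hA : A.IsHermitian) : ℝ := ⨆ i, hA.eigenvalues i

/-- The smallest eigenvalue of a Hermitian real matrix. -/
def lambdaMin {n : Type*} [Fintype n] [DecidableEq n] {A : Matrix n n ℝ}
    (hA : A.IsHermitian) : ℝ := ⨅ i, hA.eigenvalues i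

/-- The logarithmic norm `μ(A) = λ_max((A + Aᵀ)/2)` of a square real matrix. -/
def logNorm {r : ℕ} (A : Matrix (Fin r) (Fin r) ℝ) : ℝ :=
  lambdaMax (symmPart_isHermitian A)

/-- The operator norm of a square real matrix, induced by the Euclidean norm. -/
def opNorm {r : ℕ} (A : Matrix (Fin r) (Fin r) ℝ) : ℝ :=
  ‖(Matrix.toEuclideanCLM (𝕜 := ℝ) (n := Fin r) A :
      EuclideanSpace ℝ (Fin r) →L[ℝ] EuclideanSpace ℝ (Fin r))‖

/-- The Frobenius norm `‖A‖_F = √(tr(AᵀA))` of a square real matrix. -/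
def frobNorm {r : ℕ} (A : Matrix (Fin r) (Fin r) ℝ) : ℝ :=
  Real.sqrt (Matrix.trace (Aᵀ * A))

/-!
Taking traces in the Riccati equation, `tr(A P + P Aᵀ) = 2 tr(symmPart A · P) ≤ 2 μ(A) tr P` for
`P ⪰ 0`, and `tr(P S P) ≥ 0`, so `f t = tr P_t` satisfies `f' ≤ 2 μ(A) f + tr R`. Since
`2 μ(A) < 0`, Grönwall's inequality keeps `f` below `max (f 0) (-tr R / (2 μ(A)))`. For `P ⪰ 0`,
`‖P‖_F² = tr(P²) ≤ λ_max(P) tr P ≤ (tr P)²`, so the Frobenius norm inherits the bound.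
-/

open scoped MatrixOrder

namespace Matrix

variable {n : Type*} [Fintype n] [DecidableEq n]

lemma PosSemidef.trace_mul_nonneg {P Q : Matrix n n ℝ} (hP : P.PosSemidef) (hQ : Q.PosSemidef) :
    0 ≤ (P * Q).trace := by
  obtain ⟨B, rfl⟩ := CStarAlgebra.nonneg_iff_eq_star_mul_self.mp hQ.nonneg
  rw [← mul_assoc, trace_mul_comm, ← mul_assoc]
  exact (hP.mul_mul_conjTranspose_same B).trace_nonneg

lemma IsHermitian.posSemidef_smul_one_sub {M : Matrix n n ℝ} (hM : M.IsHermitian) {c : ℝ}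
    (hc : ∀ i, hM.eigenvalues i ≤ c) : (c • 1 - M).PosSemidef := by
  have hspec : ∀ x ∈ spectrum ℝ M, x ≤ c := by
    rw [hM.spectrum_real_eq_range_eigenvalues]
    rintro _ ⟨i, rfl⟩
    exact hc i
  have hle : M ≤ algebraMap ℝ _ c :=
    le_algebraMap_of_spectrum_le (A := Matrix n n ℝ) (p := IsSelfAdjoint) hspec hM
  rwa [le_iff, Algebra.algebraMap_eq_smul_one] at hle

lemma IsHermitian.trace_mul_le_of_eigenvalues_le {M P : Matrix n n ℝ} (hM : M.IsHermitian)
    (hP : P.PosSemidef) {c : ℝ} (hc : ∀ i, hM.eigenvalues i ≤ c) :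
    (M * P).trace ≤ c * P.trace := by
  have h := (hM.posSemidef_smul_one_sub hc).trace_mul_nonneg hP
  rwa [sub_mul, smul_mul, one_mul, trace_sub, trace_smul, smul_eq_mul, sub_nonneg] at h

lemma PosSemidef.trace_mul_self_le_sq {Q : Matrix n n ℝ} (hQ : Q.PosSemidef) :
    (Q * Q).trace ≤ Q.trace ^ 2 := by
  rw [sq]
  refine hQ.1.trace_mul_le_of_eigenvalues_le hQ fun i => ?_
  rw [hQ.1.trace_eq_sum_eigenvalues]
  exact Finset.single_le_sum (fun j _ => hQ.eigenvalues_nonneg j) (Finset.mem_univ i)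

end Matrix

lemma frobNorm_le_trace {r : ℕ} {Q : Matrix (Fin r) (Fin r) ℝ} (hQ : Q.PosSemidef) :
    frobNorm Q ≤ Q.trace := by
  have hQt : Qᵀ = Q := hQ.1
  rw [frobNorm, hQt]
  exact (Real.sqrt_le_left hQ.trace_nonneg).mpr hQ.trace_mul_self_le_sq

lemma le_max_of_hasDerivAt_le_mul_add {f f' : ℝ → ℝ} {c b : ℝ} (hc : c < 0)
    (hf : ∀ t ≥ 0, HasDerivAt f (f' t) t) (hle : ∀ t ≥ 0, f' t ≤ c * f t + b) :
    ∀ t ≥ 0, f t ≤ max (f 0) (-b / c) := by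
  intro t ht
  have hgr := le_gronwallBound_of_liminf_deriv_right_le (a := 0) (b := t)
    (fun x hx => (hf x hx.1).continuousAt.continuousWithinAt)
    (fun x hx _ hr => (hf x hx.1).hasDerivWithinAt.liminf_right_slope_le hr) le_rfl
    (fun x hx => hle x hx.1) t ⟨ht, le_rfl⟩
  rw [sub_zero, gronwallBound_of_K_ne_0 hc.ne] at hgr
  set e := Real.exp (c * t)
  have he0 : 0 ≤ e := (Real.exp_pos _).le
  have he1 : e ≤ 1 := exp_le_one_iff.mpr (mul_nonpos_of_nonpos_of_nonneg hc.le ht)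
  calc f t ≤ e * f 0 + (1 - e) * (-b / c) := by rw [neg_div]; linarith
    _ ≤ e * max (f 0) (-b / c) + (1 - e) * max (f 0) (-b / c) := by
      gcongr
      · exact le_max_left _ _
      · exact le_max_right _ _
    _ = max (f 0) (-b / c) := by ring

lemma hasDerivAt_trace {𝕜 : Type*} [NontriviallyNormedField 𝕜] {n : Type*} [Fintype n]
    {P : 𝕜 → Matrix n n 𝕜} {P' : Matrix n n 𝕜} {t : 𝕜}
    (hP : ∀ i j, HasDerivAt (fun u => P u i j) (P' i j) t) :
    HasDerivAt (fun u => (P u).trace) P'.trace t := by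
  simpa only [trace, diag, Finset.sum_apply] using
    HasDerivAt.fun_sum fun i (_ : i ∈ Finset.univ) => hP i i

lemma eigenvalues_symmPart_le_logNorm {r : ℕ} (A : Matrix (Fin r) (Fin r) ℝ) (i : Fin r) :
    (symmPart_isHermitian A).eigenvalues i ≤ logNorm A :=
  le_ciSup (Set.finite_range _).bddAbove i

lemma trace_mul_add_mul_transpose_le_logNorm {r : ℕ} (A : Matrix (Fin r) (Fin r) ℝ)
    {P : Matrix (Fin r) (Fin r) ℝ} (hP : P.PosSemidef) :
    (A * P + P * Aᵀ).trace ≤ 2 * logNorm A * P.trace := by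
  have hsymm : (A * P + P * Aᵀ).trace = 2 * (symmPart A * P).trace := by
    rw [trace_add, trace_mul_comm P, ← trace_add, ← add_mul, symmPart, smul_mul, trace_smul,
      smul_eq_mul]
    ring
  rw [hsymm, mul_assoc]
  gcongr
  exact (symmPart_isHermitian A).trace_mul_le_of_eigenvalues_le hP
    (eigenvalues_symmPart_le_logNorm A)

lemma trace_riccati_le {r : ℕ} (A S R : Matrix (Fin r) (Fin r) ℝ) (hS : S.PosSemidef)
    {P : Matrix (Fin r) (Fin r) ℝ} (hP : P.PosSemidef) :
    (A * P + P * Aᵀ - P * S * P + R).trace ≤ 2 * logNorm A * P.trace + R.trace := by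
  have hPSP : 0 ≤ (P * S * P).trace := by
    simpa only [hP.1.eq] using (hS.conjTranspose_mul_mul_same P).trace_nonneg
  rw [trace_add, trace_sub]
  linarith [trace_mul_add_mul_transpose_le_logNorm A hP]

theorem riccati_uniform_bound_general {r : ℕ}
    (A S R : Matrix (Fin r) (Fin r) ℝ) (hS : S.PosSemidef)
    (hμ : logNorm A < 0)
    (P : ℝ → Matrix (Fin r) (Fin r) ℝ)
    (hP : ∀ t i j, HasDerivAt (fun u => P u i j)
      ((A * P t + P t * Aᵀ - P t * S * P t + R) i j) t)
    (hpsd : ∀ t, (P t).PosSemidef) :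
    (∃ C : ℝ, ∀ t ≥ (0 : ℝ), Matrix.trace (P t) ≤ C) ∧
    (∃ C : ℝ, ∀ t ≥ (0 : ℝ), frobNorm (P t) ≤ C) := by
  have htrace := le_max_of_hasDerivAt_le_mul_add (by linarith : 2 * logNorm A < 0)
    (fun t _ => hasDerivAt_trace (hP t)) (fun t _ => trace_riccati_le A S R hS (hpsd t))
  exact ⟨⟨_, htrace⟩, ⟨_, fun t ht => (frobNorm_le_trace (hpsd t)).trans (htrace t ht)⟩⟩

/-- if `μ(A) < 0`, the trace (equivalently the Frobenius norm) of the
Riccati flow is uniformly bounded in time. -/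
theorem riccati_uniform_bound {r : ℕ}
    (A S R : Matrix (Fin r) (Fin r) ℝ) (hS : S.PosSemidef) (hR : R.PosSemidef)
    (hμ : logNorm A < 0)
    (P : ℝ → Matrix (Fin r) (Fin r) ℝ)
    (hP : ∀ t i j, HasDerivAt (fun u => P u i j)
      ((A * P t + P t * Aᵀ - P t * S * P t + R) i j) t)
    (hpsd : ∀ t, (P t).PosSemidef) :
    (∃ C : ℝ, ∀ t ≥ (0 : ℝ), Matrix.trace (P t) ≤ C) ∧
    (∃ C : ℝ, ∀ t ≥ (0 : ℝ), frobNorm (P t) ≤ C) :=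
  riccati_uniform_bound_general A S R hS hμ P hP hpsd
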